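/- arXiv:1512.07852 — 5 statements merged into one kernel-verified Lean document; each statement's English description precedes it below -/
import Mathlib

section
/- Let G be an (r,t)-Ruzsa–Szemerédi graph on n vertices, where t is odd. Then r ≤ (n/4)·(1 + 1/t). -/
/-- A finset `M` of edges is an *induced matching* in the graph `G`:
all its elements are edges of `G`, distinct edges share no vertex, and every
edge of `G` both of whose endpoints are covered by `M` belongs to `M`. -/
def IsInducedMatching {V : Type*} (G : SimpleGraph V) (M : Finset (Sym2 V)) : Prop :=
  (M : Set (Sym2 V)) ⊆ G.edgeSet ∧
  (∀ e ∈ M, ∀ f ∈ M, e ≠ f → ∀ v : V, v ∈ e → v ∉ f) ∧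
  (∀ e ∈ G.edgeSet, (∀ v ∈ e, ∃ f ∈ M, v ∈ f) → e ∈ M)

/-- `G` is an `(r, t)`-Ruzsa–Szemerédi graph: its edge set is partitioned into
`t` pairwise edge-disjoint induced matchings, each of size `r`. -/
def IsRSGraph {V : Type*} (G : SimpleGraph V) (r t : ℕ) : Prop :=
  ∃ M : Fin t → Finset (Sym2 V),
    (∀ i, IsInducedMatching G (M i)) ∧
    (∀ i, (M i).card = r) ∧
    (∀ i j, i ≠ j → Disjoint (M i) (M j)) ∧
    (∀ e : Sym2 V, e ∈ G.edgeSet ↔ ∃ i, e ∈ M i)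

/-!
Let `d v` be the number of matchings covering the vertex `v`. If `s(a, b)` lies in the matching
`M i` and both `a` and `b` are covered by `M j`, then `s(a, b) ∈ M j` because `M j` is induced,
so `j = i` by edge-disjointness; hence `d a + d b ≤ t + 1` along every edge. Double counting gives
`∑ d = 2rt` and `∑ d² = ∑_{s(a,b)} (d a + d b) ≤ rt(t + 1)`, and Cauchy–Schwarz
`(∑ d)² ≤ n ∑ d²` yields `4rt ≤ n(t + 1)`.
-/

open Finset Function

section RSBound

variable {V ι : Type*} [DecidableEq V] {G : SimpleGraph V}

def coveredVerts (M : Finset (Sym2 V)) : Finset V := M.biUnion Sym2.toFinset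

lemma mem_coveredVerts {M : Finset (Sym2 V)} {v : V} : v ∈ coveredVerts M ↔ ∃ e ∈ M, v ∈ e := by
  simp [coveredVerts, Sym2.mem_toFinset]

namespace IsInducedMatching

variable {M : Finset (Sym2 V)}

lemma pairwiseDisjoint_toFinset (hM : IsInducedMatching G M) :
    (M : Set (Sym2 V)).PairwiseDisjoint Sym2.toFinset :=
  fun e he f hf hne => disjoint_left.mpr fun v hve hvf =>
    hM.2.1 e he f hf hne v (Sym2.mem_toFinset.mp hve) (Sym2.mem_toFinset.mp hvf)

lemma sum_coveredVerts {β : Type*} [AddCommMonoid β] (hM : IsInducedMatching G M) (f : V → β) :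
    ∑ v ∈ coveredVerts M, f v = ∑ e ∈ M, ∑ v ∈ e.toFinset, f v :=
  sum_biUnion hM.pairwiseDisjoint_toFinset

lemma card_coveredVerts (hM : IsInducedMatching G M) : #(coveredVerts M) = 2 * #M := by
  rw [coveredVerts, card_biUnion hM.pairwiseDisjoint_toFinset, sum_const_nat, mul_comm]
  exact fun e he => Sym2.card_toFinset_of_not_isDiag e (G.not_isDiag_of_mem_edgeSet (hM.1 he))

lemma mem_of_forall_mem_coveredVerts (hM : IsInducedMatching G M) {e : Sym2 V}
    (he : e ∈ G.edgeSet) (hcov : ∀ v ∈ e, v ∈ coveredVerts M) : e ∈ M :=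
  hM.2.2 e he fun v hv => mem_coveredVerts.mp (hcov v hv)

end IsInducedMatching

section MatchingDegree

variable [Fintype ι]

def matchingDegree (M : ι → Finset (Sym2 V)) (v : V) : ℕ := #{i | v ∈ coveredVerts (M i)}

lemma sum_matchingDegree_mul [Fintype V] (M : ι → Finset (Sym2 V)) (f : V → ℕ) :
    ∑ v, matchingDegree M v * f v = ∑ i, ∑ v ∈ coveredVerts (M i), f v := by
  simp only [matchingDegree, card_eq_sum_ones, sum_mul, sum_filter, boole_mul]
  rw [sum_comm]
  exact sum_congr rfl fun i _ => by rw [sum_ite_mem, univ_inter]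

lemma matchingDegree_add_le [DecidableEq ι] {M : ι → Finset (Sym2 V)}
    (hM : ∀ i, IsInducedMatching G (M i)) (hdisj : Pairwise (Disjoint on M)) {i : ι} {a b : V}
    (hab : s(a, b) ∈ M i) :
    matchingDegree M a + matchingDegree M b ≤ Fintype.card ι + 1 := by
  set A : Finset ι := {j | a ∈ coveredVerts (M j)}
  set B : Finset ι := {j | b ∈ coveredVerts (M j)}
  have hinter : A ∩ B ⊆ {i} := by
    intro j hj
    simp only [A, B, mem_inter, mem_filter_univ] at hj
    have hj : s(a, b) ∈ M j := (hM j).mem_of_forall_mem_coveredVerts ((hM i).1 hab)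
      fun v hv => by rcases Sym2.mem_iff.mp hv with rfl | rfl <;> simp [hj]
    by_contra hji
    exact disjoint_left.mp (hdisj (Ne.symm (mem_singleton.not.mp hji))) hab hj
  calc matchingDegree M a + matchingDegree M b = #(A ∪ B) + #(A ∩ B) :=
        (card_union_add_card_inter A B).symm
    _ ≤ Fintype.card ι + 1 :=
        add_le_add (card_le_univ _) ((card_le_card hinter).trans_eq (card_singleton i))

end MatchingDegree

theorem IsRSGraph.four_mul_mul_le [Fintype V] {r t : ℕ} (hG : IsRSGraph G r t) :
    4 * r * t ≤ Fintype.card V * (t + 1) := by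
  obtain ⟨M, hM, hcard, hdisj, -⟩ := hG
  set d := matchingDegree M
  have hsum : ∑ v, d v = 2 * r * t := by
    simpa [(hM _).card_coveredVerts, hcard, mul_comm] using sum_matchingDegree_mul M 1
  have hsq : ∑ v, d v ^ 2 ≤ r * t * (t + 1) := calc
    ∑ v, d v ^ 2 = ∑ i, ∑ e ∈ M i, ∑ v ∈ e.toFinset, d v := by
      simp only [sq]
      exact (sum_matchingDegree_mul M d).trans
        (sum_congr rfl fun i _ => (hM i).sum_coveredVerts d)
    _ ≤ ∑ i : Fin t, ∑ _e ∈ M i, (t + 1) := by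
      refine sum_le_sum fun i _ => sum_le_sum fun e he => ?_
      induction e using Sym2.ind with
      | _ a b =>
        rw [Sym2.toFinset_mk_eq, sum_pair ((hM i).1 he).ne]
        simpa using matchingDegree_add_le hM (fun i j => hdisj i j) he
    _ = r * t * (t + 1) := by simp [hcard]; ring
  have hCS : (∑ v, d v) ^ 2 ≤ Fintype.card V * ∑ v, d v ^ 2 := sq_sum_le_card_mul_sum_sq
  rcases Nat.eq_zero_or_pos (r * t) with hrt | hrt
  · simp [mul_assoc, hrt]
  refine Nat.le_of_mul_le_mul_right ?_ hrt
  calc 4 * r * t * (r * t) = (∑ v, d v) ^ 2 := by rw [hsum]; ring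
    _ ≤ Fintype.card V * (r * t * (t + 1)) := hCS.trans (Nat.mul_le_mul_left _ hsq)
    _ = Fintype.card V * (t + 1) * (r * t) := by ring

end RSBound

/-- If `G` is an `(r,t)`-RS graph on `n` vertices and `t` is odd,
then `r ≤ (n/4)·(1 + 1/t)`. -/
theorem rs_upper_bound_odd {V : Type*} [Fintype V] (G : SimpleGraph V) (n r t : ℕ)
    (hn : Fintype.card V = n) (ht : Odd t) (hG : IsRSGraph G r t) :
    (r : ℝ) ≤ ((n : ℝ) / 4) * (1 + 1 / (t : ℝ)) := by
  classical
  have hmain : (4 * r * t : ℝ) ≤ n * (t + 1) := by exact_mod_cast hn ▸ hG.four_mul_mul_le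
  have htpos : (0 : ℝ) < t := by exact_mod_cast ht.pos
  rw [show (n : ℝ) / 4 * (1 + 1 / t) = n * (t + 1) / (4 * t) by field_simp,
    le_div_iff₀ (by positivity)]
  linarith
end

section
/- Let G be an (r,t)-Ruzsa–Szemerédi graph on n vertices, where t is even. Then r ≤ (n/4)·(1 + 1/(t+1)). -/
/-!
A vertex lies on at most one edge of each matching and every edge lies in some matching, so
`deg v` is at most the number of matchings covering `v`. If `xy` lies in the matching `M i`, no
other matching covers both `x` and `y`, since by inducedness it would contain `xy`; hence
`deg x + deg y ≤ t + 1`. Give each vertex weight `1 / deg v`: summed over the edges, the weights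
`1/deg x + 1/deg y` count the non-isolated vertices, so they total at most `n`. Each edge
contributes at least `4(t+1)/(t(t+2))`, and this is where `t` is even: if `deg x + deg y = t + 1`
is odd, the two degrees differ, so `deg x · deg y ≤ t(t+2)/4`. The `rt` edges therefore give
`rt · 4(t+1)/(t(t+2)) ≤ n`.
-/

open Finset

theorem four_mul_mul_add_one_le_sq_of_odd {a b : ℕ} (h : Odd (a + b)) :
    4 * (a * b) + 1 ≤ (a + b) ^ 2 := by
  have hne : a ≠ b := by rintro rfl; exact Nat.not_even_iff_odd.2 h (by simp)
  rcases hne.lt_or_gt with h' | h' <;> nlinarith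

theorem four_mul_add_one_mul_le {a b t : ℕ} (hab : a + b ≤ t + 1) (ht : Even t) :
    4 * (t + 1) * (a * b) ≤ (a + b) * (t * (t + 2)) := by
  rcases hab.lt_or_eq with hlt | heq
  · have hsq : 4 * (a * b) ≤ (a + b) * t := by
      nlinarith [sq_nonneg ((a : ℤ) - b), Nat.le_of_lt_succ hlt]
    calc 4 * (t + 1) * (a * b) = (t + 1) * (4 * (a * b)) := by ring
      _ ≤ (t + 2) * ((a + b) * t) := Nat.mul_le_mul (by omega) hsq
      _ = _ := by ring
  · have := four_mul_mul_add_one_le_sq_of_odd (heq ▸ ht.add_one)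
    rw [heq] at this ⊢
    nlinarith

theorem four_mul_add_one_div_le_inv_add_inv {a b t : ℕ} (ha : 0 < a) (hb : 0 < b)
    (hab : a + b ≤ t + 1) (ht : Even t) :
    4 * ((t : ℝ) + 1) / (t * (t + 2)) ≤ (a : ℝ)⁻¹ + (b : ℝ)⁻¹ := by
  have htpos : 0 < t := by omega
  have key : (4 * (t + 1) * (a * b) : ℝ) ≤ (a + b) * (t * (t + 2)) := by
    exact_mod_cast four_mul_add_one_mul_le hab ht
  rw [inv_add_inv (by positivity) (by positivity), div_le_div_iff₀ (by positivity) (by positivity)]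
  linarith

namespace SimpleGraph

variable {V : Type*} [Fintype V] (G : SimpleGraph V) [DecidableRel G.Adj]

theorem sum_dart_inv_degree_fst_le_card [DecidableEq V] :
    ∑ d : G.Dart, (G.degree d.fst : ℝ)⁻¹ ≤ Fintype.card V := by
  rw [← sum_fiberwise' univ (fun d : G.Dart ↦ d.fst) fun v ↦ (G.degree v : ℝ)⁻¹]
  simp only [sum_const, dart_fst_fiber_card_eq_degree, nsmul_eq_mul]
  simpa using sum_le_sum fun v (_ : v ∈ univ) ↦ mul_inv_le_one (a := (G.degree v : ℝ))

theorem card_edgeFinset_mul_le_card_of_le_inv_degree_add_inv_degree {c : ℝ}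
    (h : ∀ x y, G.Adj x y → c ≤ (G.degree x : ℝ)⁻¹ + (G.degree y : ℝ)⁻¹) :
    #G.edgeFinset * c ≤ Fintype.card V := by
  classical
  have hsymm : ∑ d : G.Dart, (G.degree d.snd : ℝ)⁻¹ = ∑ d : G.Dart, (G.degree d.fst : ℝ)⁻¹ :=
    Equiv.sum_comp (Dart.symm_involutive.toPerm _) fun d : G.Dart ↦ (G.degree d.fst : ℝ)⁻¹
  have : (2 * #G.edgeFinset : ℝ) * c ≤ 2 * Fintype.card V := calc
    (2 * #G.edgeFinset : ℝ) * c = ∑ _d : G.Dart, c := by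
      simp [dart_card_eq_twice_card_edges]
    _ ≤ ∑ d : G.Dart, ((G.degree d.fst : ℝ)⁻¹ + (G.degree d.snd : ℝ)⁻¹) :=
      sum_le_sum fun d _ ↦ h _ _ d.adj
    _ ≤ 2 * Fintype.card V := by
      rw [sum_add_distrib, hsymm]
      linarith [G.sum_dart_inv_degree_fst_le_card]
  linarith

end SimpleGraph

section InducedMatchings

variable {V ι : Type*} [Fintype ι] {G : SimpleGraph V} {M : ι → Finset (Sym2 V)}

open Classical in
noncomputable def coveringIndices (M : ι → Finset (Sym2 V)) (v : V) : Finset ι :=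
  {i | ∃ e ∈ M i, v ∈ e}

theorem mem_coveringIndices {v : V} {i : ι} :
    i ∈ coveringIndices M v ↔ ∃ e ∈ M i, v ∈ e := by
  simp [coveringIndices]

theorem degree_le_card_coveringIndices (hM : ∀ i, IsInducedMatching G (M i))
    (hcov : ∀ e ∈ G.edgeSet, ∃ i, e ∈ M i) (v : V) [Fintype (G.neighborSet v)] :
    G.degree v ≤ #(coveringIndices M v) := by
  rw [← G.card_neighborFinset_eq_degree]
  refine card_le_card_of_forall_subsingleton (fun w i ↦ s(v, w) ∈ M i) ?_ ?_
  · intro w hw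
    obtain ⟨i, hi⟩ := hcov s(v, w) ((G.mem_neighborFinset v w).1 hw)
    exact ⟨i, mem_coveringIndices.2 ⟨_, hi, Sym2.mem_mk_left v w⟩, hi⟩
  · rintro i - w ⟨-, hw⟩ w' ⟨-, hw'⟩
    by_contra hne
    exact (hM i).2.1 _ hw _ hw' (mt Sym2.congr_right.1 hne) v (Sym2.mem_mk_left v w)
      (Sym2.mem_mk_left v w')

theorem card_coveringIndices_add_card_coveringIndices_le (hM : ∀ i, IsInducedMatching G (M i))
    (hdisj : ∀ i j, i ≠ j → Disjoint (M i) (M j)) {x y : V} {i₀ : ι} (hxy : s(x, y) ∈ M i₀) :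
    #(coveringIndices M x) + #(coveringIndices M y) ≤ Fintype.card ι + 1 := by
  classical
  have hinter : coveringIndices M x ∩ coveringIndices M y ⊆ {i₀} := by
    intro j hj
    rw [mem_inter, mem_coveringIndices, mem_coveringIndices] at hj
    have hxyj : s(x, y) ∈ M j := (hM j).2.2 _ ((hM i₀).1 hxy) fun v hv ↦ by
      rcases Sym2.mem_iff.1 hv with rfl | rfl
      exacts [hj.1, hj.2]
    by_contra hne
    exact disjoint_left.1 (hdisj j i₀ (by simpa using hne)) hxyj hxy
  have hinter_card : #(coveringIndices M x ∩ coveringIndices M y) ≤ 1 :=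
    (card_le_card hinter).trans (card_singleton i₀).le
  have hunion_card := card_le_univ (coveringIndices M x ∪ coveringIndices M y)
  have := card_union_add_card_inter (coveringIndices M x) (coveringIndices M y)
  omega

theorem degree_add_degree_le_card_add_one (hM : ∀ i, IsInducedMatching G (M i))
    (hdisj : ∀ i j, i ≠ j → Disjoint (M i) (M j)) (hcov : ∀ e ∈ G.edgeSet, ∃ i, e ∈ M i)
    {x y : V} [Fintype (G.neighborSet x)] [Fintype (G.neighborSet y)] (hxy : G.Adj x y) :
    G.degree x + G.degree y ≤ Fintype.card ι + 1 := by
  obtain ⟨i₀, hi₀⟩ := hcov s(x, y) hxy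
  have := degree_le_card_coveringIndices hM hcov x
  have := degree_le_card_coveringIndices hM hcov y
  have := card_coveringIndices_add_card_coveringIndices_le hM hdisj hi₀
  omega

theorem card_edgeFinset_eq_sum_card [Fintype G.edgeSet]
    (hdisj : ∀ i j, i ≠ j → Disjoint (M i) (M j)) (hcov : ∀ e, e ∈ G.edgeSet ↔ ∃ i, e ∈ M i) :
    #G.edgeFinset = ∑ i, #(M i) := by
  classical
  have : G.edgeFinset = univ.biUnion M := by ext e; simp [hcov]
  rw [this, card_biUnion fun i _ j _ hij ↦ hdisj i j hij]

end InducedMatchings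

/-- If `G` is an `(r,t)`-RS graph on `n` vertices and `t` is even (and positive),
then `r ≤ (n/4)·(1 + 1/(t+1))`. -/
theorem rs_upper_bound_even {V : Type*} [Fintype V] (G : SimpleGraph V) (n r t : ℕ)
    (hn : Fintype.card V = n) (ht : Even t) (ht' : 0 < t) (hG : IsRSGraph G r t) :
    (r : ℝ) ≤ ((n : ℝ) / 4) * (1 + 1 / ((t : ℝ) + 1)) := by
  classical
  obtain ⟨M, hM, hcard, hdisj, hcov⟩ := hG
  have hweight : ∀ x y, G.Adj x y →
      4 * ((t : ℝ) + 1) / (t * (t + 2)) ≤ (G.degree x : ℝ)⁻¹ + (G.degree y : ℝ)⁻¹ :=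
    fun x y hxy ↦ four_mul_add_one_div_le_inv_add_inv hxy.degree_pos_left hxy.degree_pos_right
      (by simpa using degree_add_degree_le_card_add_one hM hdisj (fun e ↦ (hcov e).1) hxy) ht
  have hcount := G.card_edgeFinset_mul_le_card_of_le_inv_degree_add_inv_degree hweight
  simp only [card_edgeFinset_eq_sum_card hdisj hcov, hcard, sum_const, card_univ,
    Fintype.card_fin, smul_eq_mul, hn, Nat.cast_mul] at hcount
  have htpos : (0 : ℝ) < t := by exact_mod_cast ht'
  rw [mul_div_assoc', div_le_iff₀ (by positivity)] at hcount
  have hbound : (n : ℝ) / 4 * (1 + 1 / ((t : ℝ) + 1)) = n * (t + 2) / (4 * (t + 1)) := by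
    field_simp
    ring
  rw [hbound, le_div_iff₀ (by positivity)]
  exact le_of_mul_le_mul_left (by linarith) htpos
end

section
/- For every positive integer k, the Kneser graph KG(2k+1,k), whose vertices are the k-element subsets of a (2k+1)-element set with two vertices adjacent iff the corresponding sets are disjoint, is an (r, 2k+1)-Ruzsa–Szemerédi graph on n = C(2k+1,k) vertices with r = (1/2)·C(2k,k) = (n/4)·(1 + 1/(2k+1)). The matchings can be taken to be M_1, …, M_{2k+1}, where the edge (A,B) belongs to M_i iff A ∩ B = ∅ and A ∪ B = [2k+1] \ {i}. -/
/-- The Kneser graph `KG(2k+1, k)`: vertices are the `k`-element subsets of a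
`(2k+1)`-element set, two of them adjacent iff they are disjoint. -/
def kneserGraph (k : ℕ) : SimpleGraph {s : Finset (Fin (2 * k + 1)) // s.card = k} where
  Adj A B := Disjoint A.1 B.1 ∧ A ≠ B
  symm := ⟨fun A B h => ⟨h.1.symm, h.2.symm⟩⟩
  loopless := ⟨fun A h => h.2 rfl⟩

/-!
An edge `{A, B}` of `KG(2k+1, k)` misses exactly one point `i` of `[2k+1]`, which gives the
colouring. The edges of colour `i` pair each `k`-subset of `[2k+1] \ {i}` with its complement
there, so they form a matching with `C(2k, k) / 2` edges; it is induced because two disjoint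
`k`-sets that both avoid `i` already partition `[2k+1] \ {i}`.
-/

open Finset SimpleGraph

theorem isInducedMatching_edgeFinset {V : Type*} {G H : SimpleGraph V} [Fintype H.edgeSet]
    (hle : H ≤ G) (hunique : ∀ ⦃u v w⦄, H.Adj u v → H.Adj u w → v = w)
    (hinduced : ∀ ⦃u v⦄, G.Adj u v → (∃ w, H.Adj u w) → (∃ w, H.Adj v w) → H.Adj u v) :
    IsInducedMatching G H.edgeFinset := by
  have adj_of_mem {v : V} {e : Sym2 V} (he : e ∈ H.edgeFinset) (hv : v ∈ e) :
      ∃ w, H.Adj v w ∧ e = s(v, w) := by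
    obtain ⟨w, rfl⟩ := Sym2.mem_iff_exists.1 hv
    exact ⟨w, by simpa using he, rfl⟩
  refine ⟨by simpa using edgeSet_mono hle, ?_, ?_⟩
  · intro e he f hf hef v hve hvf
    obtain ⟨w, hvw, rfl⟩ := adj_of_mem he hve
    obtain ⟨w', hvw', rfl⟩ := adj_of_mem hf hvf
    exact hef (by rw [hunique hvw hvw'])
  · intro e he hcover
    induction e using Sym2.ind with
    | _ u v =>
      have covered {x : V} (hx : x ∈ s(u, v)) : ∃ w, H.Adj x w := by
        obtain ⟨f, hf, hxf⟩ := hcover x hx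
        obtain ⟨w, hxw, -⟩ := adj_of_mem hf hxf
        exact ⟨w, hxw⟩
      simpa using hinduced he (covered (Sym2.mem_mk_left u v)) (covered (Sym2.mem_mk_right u v))

section complementMatching

variable {α : Type*} [DecidableEq α] {k : ℕ} {T : Finset α}
  {A B : {s : Finset α // s.card = k}}

/-- For `T.card = 2 * k`, this matches each `k`-subset of `T` with its complement in `T`. The
conjunct `A ≠ B` only matters when `T = ∅`. -/
def complementMatching (k : ℕ) (T : Finset α) : SimpleGraph {s : Finset α // s.card = k} where
  Adj A B := A ≠ B ∧ Disjoint A.1 B.1 ∧ A.1 ∪ B.1 = T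
  symm := ⟨fun _ _ h => ⟨h.1.symm, h.2.1.symm, by rw [union_comm, h.2.2]⟩⟩
  loopless := ⟨fun _ h => h.1 rfl⟩

instance : DecidableRel (complementMatching (α := α) k T).Adj :=
  fun _ _ => inferInstanceAs (Decidable (_ ∧ _ ∧ _))

theorem complementMatching_adj_iff (hT : T.Nonempty) :
    (complementMatching k T).Adj A B ↔ Disjoint A.1 B.1 ∧ A.1 ∪ B.1 = T := by
  refine ⟨fun h => h.2, fun h => ⟨?_, h⟩⟩
  rintro rfl
  obtain ⟨hd, hu⟩ := h
  rw [(disjoint_self_iff_empty _).1 hd, union_empty] at hu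
  exact hT.ne_empty hu.symm

theorem complementMatching_adj_iff_eq_sdiff (hT : T.Nonempty) :
    (complementMatching k T).Adj A B ↔ A.1 ⊆ T ∧ B.1 = T \ A.1 := by
  rw [complementMatching_adj_iff hT]
  constructor
  · rintro ⟨hd, hu⟩
    exact ⟨hu ▸ subset_union_left, (hd.sdiff_eq_of_sup_eq hu).symm⟩
  · rintro ⟨hA, hB⟩
    rw [hB]
    exact ⟨disjoint_sdiff, union_sdiff_of_subset hA⟩

theorem complementMatching_adj_of_subset (hT : T.card = 2 * k) (hA : A.1 ⊆ T) (hB : B.1 ⊆ T)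
    (hd : Disjoint A.1 B.1) (hne : A ≠ B) :
    (complementMatching k T).Adj A B := by
  refine ⟨hne, hd, eq_of_subset_of_card_le (union_subset hA hB) ?_⟩
  rw [card_union_of_disjoint hd, A.2, B.2, hT]
  omega

theorem degree_complementMatching [Fintype α] (hk : 0 < k) (hT : T.card = 2 * k) :
    (complementMatching k T).degree A = if A.1 ⊆ T then 1 else 0 := by
  have hTne : T.Nonempty := card_pos.1 (by omega)
  rw [← card_neighborFinset_eq_degree]
  split_ifs with hA
  · have hcard : (T \ A.1).card = k := by rw [card_sdiff_of_subset hA, hT, A.2]; omega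
    rw [card_eq_one]
    refine ⟨⟨T \ A.1, hcard⟩, ?_⟩
    ext B
    simp [complementMatching_adj_iff_eq_sdiff hTne, hA, Subtype.ext_iff]
  · rw [card_eq_zero, eq_empty_iff_forall_notMem]
    intro B hB
    rw [mem_neighborFinset, complementMatching_adj_iff_eq_sdiff hTne] at hB
    exact hA hB.1

theorem card_filter_val_subset [Fintype α] (T : Finset α) :
    #{A : {s : Finset α // s.card = k} | A.1 ⊆ T} = T.card.choose k := by
  rw [← card_powersetCard, ← card_map (Function.Embedding.subtype _)]
  congr 1
  ext s
  simp [mem_powersetCard, and_comm]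

theorem two_mul_card_edgeFinset_complementMatching [Fintype α] (hk : 0 < k) (hT : T.card = 2 * k) :
    2 * #(complementMatching k T).edgeFinset = (2 * k).choose k := by
  rw [← sum_degrees_eq_twice_card_edges, ← hT, ← card_filter_val_subset, card_filter]
  exact sum_congr rfl fun _ _ => degree_complementMatching hk hT

theorem disjoint_edgeFinset_complementMatching [Fintype α] {T T' : Finset α} (h : T ≠ T') :
    Disjoint (complementMatching k T).edgeFinset (complementMatching k T').edgeFinset := by
  rw [Finset.disjoint_left]
  intro e he he'
  induction e using Sym2.ind with
  | _ A B =>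
    simp only [mem_edgeFinset, mem_edgeSet] at he he'
    exact h (he.2.2.symm.trans he'.2.2)

end complementMatching

theorem eq_choose_div_four_mul_of_two_mul_eq_choose {k r : ℕ} (h : 2 * r = (2 * k).choose k) :
    (r : ℝ) = ((2 * k + 1).choose k / 4) * (1 + 1 / (2 * k + 1)) := by
  have hpascal : ((2 * k + 1).choose k * (k + 1) : ℝ) = (2 * k + 1) * (2 * k).choose k := by
    rw [← Nat.choose_symm_half]
    exact_mod_cast (Nat.add_one_mul_choose_eq (2 * k) k).symm
  have hr : (2 * r : ℝ) = (2 * k).choose k := by exact_mod_cast h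
  field_simp
  linear_combination (-2) * hpascal + (2 * (2 * k + 1) : ℝ) * hr

section kneserGraph

variable {k : ℕ}

theorem card_univ_sdiff_singleton (i : Fin (2 * k + 1)) : (univ \ {i}).card = 2 * k := by
  simp [card_univ_sdiff]

theorem univ_sdiff_singleton_nonempty (hk : 0 < k) (i : Fin (2 * k + 1)) :
    (univ \ {i}).Nonempty :=
  card_pos.1 (by rw [card_univ_sdiff_singleton]; omega)

theorem complementMatching_le_kneserGraph (i : Fin (2 * k + 1)) :
    complementMatching k (univ \ {i}) ≤ kneserGraph k :=
  fun _ _ h => ⟨h.2.1, h.1⟩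

theorem kneserGraph_adj_iff_exists {A B : {s : Finset (Fin (2 * k + 1)) // s.card = k}} :
    (kneserGraph k).Adj A B ↔ ∃ i, (complementMatching k (univ \ {i})).Adj A B := by
  refine ⟨fun ⟨hd, hne⟩ => ?_, fun ⟨i, h⟩ => complementMatching_le_kneserGraph i h⟩
  have hcompl : (A.1 ∪ B.1)ᶜ.card = 1 := by
    rw [card_compl, card_union_of_disjoint hd, A.2, B.2, Fintype.card_fin]
    omega
  obtain ⟨i, hi⟩ := card_eq_one.1 hcompl
  exact ⟨i, hne, hd, by rw [← compl_eq_univ_sdiff, ← hi, compl_compl]⟩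

theorem isInducedMatching_complementMatching (hk : 0 < k) (i : Fin (2 * k + 1)) :
    IsInducedMatching (kneserGraph k) (complementMatching k (univ \ {i})).edgeFinset := by
  have hTne := univ_sdiff_singleton_nonempty hk i
  have subset_of_adj {A B} (h : (complementMatching k (univ \ {i})).Adj A B) :=
    ((complementMatching_adj_iff_eq_sdiff hTne).1 h).1
  refine isInducedMatching_edgeFinset (complementMatching_le_kneserGraph i) ?_ ?_
  · intro A B C hB hC
    rw [complementMatching_adj_iff_eq_sdiff hTne] at hB hC
    exact Subtype.ext (hB.2.trans hC.2.symm)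
  · rintro A B ⟨hd, hne⟩ ⟨_, hA⟩ ⟨_, hB⟩
    exact complementMatching_adj_of_subset (card_univ_sdiff_singleton i) (subset_of_adj hA)
      (subset_of_adj hB) hd hne

end kneserGraph

/-- For every positive `k`, the Kneser graph `KG(2k+1,k)` on `n = C(2k+1,k)` vertices is an
`(r, 2k+1)`-RS graph with `r = C(2k,k)/2 = (n/4)(1 + 1/(2k+1))`; the matchings can be taken
to be `M_1, …, M_{2k+1}`, where the edge `(A,B)` belongs to `M_i` iff `A ∩ B = ∅` and
`A ∪ B = [2k+1] \ {i}`. -/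
theorem kneser_is_RS (k : ℕ) (hk : 0 < k) :
    ∃ r : ℕ,
      2 * r = (2 * k).choose k ∧
      (r : ℝ) = (((2 * k + 1).choose k : ℝ) / 4) * (1 + 1 / (2 * (k : ℝ) + 1)) ∧
      Fintype.card {s : Finset (Fin (2 * k + 1)) // s.card = k} = (2 * k + 1).choose k ∧
      ∃ M : Fin (2 * k + 1) → Finset (Sym2 {s : Finset (Fin (2 * k + 1)) // s.card = k}),
        (∀ i, IsInducedMatching (kneserGraph k) (M i)) ∧
        (∀ i, (M i).card = r) ∧
        (∀ i j, i ≠ j → Disjoint (M i) (M j)) ∧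
        (∀ e : Sym2 {s : Finset (Fin (2 * k + 1)) // s.card = k},
          e ∈ (kneserGraph k).edgeSet ↔ ∃ i, e ∈ M i) ∧
        (∀ (i : Fin (2 * k + 1)) (A B : {s : Finset (Fin (2 * k + 1)) // s.card = k}),
          s(A, B) ∈ M i ↔ Disjoint A.1 B.1 ∧ A.1 ∪ B.1 = Finset.univ \ {i}) := by
  have h2r : 2 * ((2 * k).choose k / 2) = (2 * k).choose k :=
    Nat.mul_div_cancel' (Nat.two_dvd_centralBinom_of_one_le hk)
  refine ⟨(2 * k).choose k / 2, h2r, eq_choose_div_four_mul_of_two_mul_eq_choose h2r,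
    by rw [Fintype.card_finset_len, Fintype.card_fin],
    fun i => (complementMatching k (univ \ {i})).edgeFinset,
    isInducedMatching_complementMatching hk, fun i => ?_,
    fun i j hij => disjoint_edgeFinset_complementMatching ?_, fun e => ?_, fun i A B => ?_⟩
  · have := two_mul_card_edgeFinset_complementMatching hk (card_univ_sdiff_singleton i)
    dsimp only
    omega
  · exact fun h => hij (by simpa [eq_comm] using congrArg (i ∈ ·) h)
  · induction e using Sym2.ind
    simp [kneserGraph_adj_iff_exists]
  · simp [complementMatching_adj_iff (univ_sdiff_singleton_nonempty hk i)]
end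

section
/- For every integer m ≥ 1, letting n = 2^{2m} (so log₂ n is even), there exists an (n/4, 2·(log₂ n + 1))-Ruzsa–Szemerédi graph on n vertices. -/
/-! The graph is the Cayley graph of `𝔽₂ⁿ`, `n` even, with the `n + 1` generators
`d (some i) = 1 + eᵢ` and `d none = 1`. Each generator `d k` comes with a functional `u k` that
vanishes on `d j` exactly when `j = k`: `u (some i)` is the `i`-th coordinate and `u none` the sum
of all coordinates, which kills `1` because `n` is even. So an edge with both endpoints in a
halfspace `{u k = ε}` has a direction killed by `u k`, i.e. it is a `d k`-edge: the `d k`-edges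
inside `{u k = ε}` form an induced matching. These `2 (n + 1)` matchings partition the edges,
and each one covers its halfspace, so it has `2ⁿ / 4` edges. -/

open Finset Function

theorem isRSGraph_of_fintype {V κ : Type*} [Fintype κ] {G : SimpleGraph V} {r : ℕ}
    (M : κ → Finset (Sym2 V)) (hind : ∀ i, IsInducedMatching G (M i)) (hcard : ∀ i, #(M i) = r)
    (hdisj : Pairwise (Disjoint on M)) (hedge : ∀ e, e ∈ G.edgeSet ↔ ∃ i, e ∈ M i) :
    IsRSGraph G r (Fintype.card κ) := by
  let σ := (Fintype.equivFin κ).symm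
  refine ⟨M ∘ σ, fun i => hind _, fun i => hcard _, fun i j hij => hdisj (σ.injective.ne hij),
    fun e => (hedge e).trans σ.exists_congr_right.symm⟩

theorem AddMonoidHom.two_mul_card_fiber_of_surjective {V : Type*} [AddCommGroup V] [Fintype V]
    {u : V →+ ZMod 2} (hu : Surjective u) (ε : ZMod 2) :
    2 * #{x | u x = ε} = Fintype.card V := by
  calc 2 * #{x | u x = ε} = ∑ δ : ZMod 2, #{x | u x = δ} := by
        rw [sum_congr rfl fun δ _ => AddMonoidHom.card_fiber_eq_of_mem_range u (hu δ) (hu ε)]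
        simp
    _ = Fintype.card V := (card_eq_sum_card_fiberwise fun _ _ => mem_univ _).symm

section

variable {V ι : Type*} [AddCommGroup V]

def SeparatesDirections (u : ι → V →+ ZMod 2) (d : ι → V) : Prop :=
  ∀ j k, u k (d j) = 0 ↔ j = k

namespace SeparatesDirections

variable {u : ι → V →+ ZMod 2} {d : ι → V}

theorem apply_self (h : SeparatesDirections u d) (k : ι) : u k (d k) = 0 :=
  (h k k).mpr rfl

theorem injective (h : SeparatesDirections u d) : Injective d := fun j k hjk =>
  (h j k).mp (hjk ▸ h.apply_self k)

theorem ne_zero [Nontrivial ι] (h : SeparatesDirections u d) (k : ι) : d k ≠ 0 := by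
  obtain ⟨j, hjk⟩ := exists_ne k
  intro hk
  exact hjk ((h k j).mp (by rw [hk, map_zero])).symm

theorem surjective [Nontrivial ι] (h : SeparatesDirections u d) (k : ι) : Surjective (u k) := by
  obtain ⟨j, hjk⟩ := exists_ne k
  have hj : u k (d j) = 1 := by
    rcases (by decide : ∀ a : ZMod 2, a = 0 ∨ a = 1) (u k (d j)) with h0 | h1
    · exact absurd ((h j k).mp h0) hjk
    · exact h1
  intro ε
  fin_cases ε
  · exact ⟨0, map_zero _⟩
  · exact ⟨d j, hj⟩

end SeparatesDirections

end

section CayleyGraph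

variable {V ι : Type*} [AddCommGroup V] [Module (ZMod 2) V]

theorem ZModModule.eq_add_iff_eq_add {x y c : V} : y = x + c ↔ x = y + c := by
  constructor <;> rintro rfl <;> rw [add_assoc, ZModModule.add_self, add_zero]

theorem ZModModule.sym2_add_eq_iff {x a c : V} :
    s(x, x + c) = s(a, a + c) ↔ x = a ∨ x = a + c := by
  constructor
  · rintro h
    rcases Sym2.eq_iff.mp h with ⟨rfl, -⟩ | ⟨rfl, -⟩ <;> simp
  · rintro (rfl | rfl)
    · rfl
    · rw [add_assoc, ZModModule.add_self, add_zero, Sym2.eq_swap]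

def cayleyGraph (d : ι → V) : SimpleGraph V :=
  SimpleGraph.fromRel fun x y => ∃ k, y = x + d k

theorem cayleyGraph_adj {d : ι → V} (hd : ∀ k, d k ≠ 0) {x y : V} :
    (cayleyGraph d).Adj x y ↔ ∃ k, y = x + d k := by
  rw [cayleyGraph, SimpleGraph.fromRel_adj]
  simp only [← ZModModule.eq_add_iff_eq_add (x := x), or_self]
  refine ⟨And.right, fun ⟨k, hk⟩ => ⟨?_, k, hk⟩⟩
  rintro rfl
  exact hd k (by simpa using hk)

variable [Fintype V] [DecidableEq V]

def directionMatching (u : ι → V →+ ZMod 2) (d : ι → V) (k : ι) (ε : ZMod 2) :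
    Finset (Sym2 V) :=
  ({x | u k x = ε} : Finset V).image fun x => s(x, x + d k)

variable {u : ι → V →+ ZMod 2} {d : ι → V}

theorem mem_directionMatching_iff_of_mem (h : SeparatesDirections u d) {k : ι} {ε : ZMod 2}
    {e : Sym2 V} {v : V} (hv : v ∈ e) :
    e ∈ directionMatching u d k ε ↔ e = s(v, v + d k) ∧ u k v = ε := by
  simp only [directionMatching, mem_image, mem_filter_univ]
  refine ⟨?_, fun ⟨he, hε⟩ => ⟨v, hε, he.symm⟩⟩
  rintro ⟨a, ha, rfl⟩
  have hva : v = a ∨ v = a + d k := Sym2.mem_iff.mp hv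
  refine ⟨(ZModModule.sym2_add_eq_iff.mpr hva).symm, ?_⟩
  rcases hva with rfl | rfl
  · exact ha
  · rw [map_add, h.apply_self, add_zero, ha]

theorem isInducedMatching_directionMatching [Nontrivial ι] (h : SeparatesDirections u d) (k : ι)
    (ε : ZMod 2) : IsInducedMatching (cayleyGraph d) (directionMatching u d k ε) := by
  refine ⟨?_, ?_, ?_⟩
  · intro e he
    obtain ⟨x, -, rfl⟩ := mem_image.mp he
    exact (cayleyGraph_adj h.ne_zero).mpr ⟨k, rfl⟩
  · intro e he f hf hef v hve hvf
    exact hef (((mem_directionMatching_iff_of_mem h hve).mp he).1.trans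
      ((mem_directionMatching_iff_of_mem h hvf).mp hf).1.symm)
  · intro e he hcov
    induction e using Sym2.ind with | h x y => ?_
    rw [SimpleGraph.mem_edgeSet, cayleyGraph_adj h.ne_zero] at he
    obtain ⟨j, rfl⟩ := he
    have hside : ∀ v ∈ s(x, x + d j), u k v = ε := fun v hv => by
      obtain ⟨f, hf, hvf⟩ := hcov v hv
      exact ((mem_directionMatching_iff_of_mem h hvf).mp hf).2
    have hx := hside x (Sym2.mem_mk_left _ _)
    have hjk : j = k := by
      have hy := hside _ (Sym2.mem_mk_right _ _)
      rwa [map_add, hx, add_eq_left, h] at hy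
    subst hjk
    exact (mem_directionMatching_iff_of_mem h (Sym2.mem_mk_left _ _)).mpr ⟨rfl, hx⟩

theorem card_directionMatching [Nontrivial ι] (h : SeparatesDirections u d) (k : ι) (ε : ZMod 2) :
    4 * #(directionMatching u d k ε) = Fintype.card V := by
  have hfiber : ∀ e ∈ directionMatching u d k ε,
      #{x ∈ ({x | u k x = ε} : Finset V) | s(x, x + d k) = e} = 2 := by
    intro e he
    obtain ⟨a, ha, rfl⟩ := mem_image.mp he
    rw [mem_filter_univ] at ha
    have : {x ∈ ({x | u k x = ε} : Finset V) | s(x, x + d k) = s(a, a + d k)} = {a, a + d k} := by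
      ext x
      simp only [mem_filter, mem_univ, true_and, ZModModule.sym2_add_eq_iff, mem_insert,
        mem_singleton]
      refine ⟨And.right, fun hx => ⟨?_, hx⟩⟩
      rcases hx with rfl | rfl
      · exact ha
      · rw [map_add, h.apply_self, add_zero, ha]
    rw [this, card_pair (by simpa using h.ne_zero k)]
  rw [← AddMonoidHom.two_mul_card_fiber_of_surjective (h.surjective k) ε,
    card_eq_sum_card_image (fun x => s(x, x + d k)), ← directionMatching, sum_const_nat hfiber]
  ring

theorem pairwise_disjoint_directionMatching (h : SeparatesDirections u d) :
    Pairwise (Disjoint on fun p : ι × ZMod 2 => directionMatching u d p.1 p.2) := by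
  rintro ⟨k, ε⟩ ⟨k', ε'⟩ hne
  refine disjoint_left.mpr fun e (he : e ∈ directionMatching u d k ε)
    (he' : e ∈ directionMatching u d k' ε') => hne ?_
  induction e using Sym2.ind with | h x y => ?_
  obtain ⟨hxk, hε⟩ := (mem_directionMatching_iff_of_mem h (Sym2.mem_mk_left x y)).mp he
  obtain ⟨hxk', hε'⟩ := (mem_directionMatching_iff_of_mem h (Sym2.mem_mk_left x y)).mp he'
  have hk : k = k' := h.injective (add_left_cancel (Sym2.congr_right.mp (hxk.symm.trans hxk')))
  subst hk
  rw [← hε, ← hε']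

theorem mem_edgeSet_cayleyGraph_iff [Nontrivial ι] (h : SeparatesDirections u d) (e : Sym2 V) :
    e ∈ (cayleyGraph d).edgeSet ↔ ∃ p : ι × ZMod 2, e ∈ directionMatching u d p.1 p.2 := by
  refine ⟨fun he => ?_, fun ⟨p, hp⟩ => (isInducedMatching_directionMatching h p.1 p.2).1 hp⟩
  induction e using Sym2.ind with | h x y => ?_
  rw [SimpleGraph.mem_edgeSet, cayleyGraph_adj h.ne_zero] at he
  obtain ⟨k, rfl⟩ := he
  exact ⟨(k, u k x), (mem_directionMatching_iff_of_mem h (Sym2.mem_mk_left _ _)).mpr ⟨rfl, rfl⟩⟩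

theorem isRSGraph_cayleyGraph [Fintype ι] [Nontrivial ι] (h : SeparatesDirections u d) :
    IsRSGraph (cayleyGraph d) (Fintype.card V / 4) (2 * Fintype.card ι) := by
  have hcard : Fintype.card (ι × ZMod 2) = 2 * Fintype.card ι := by
    rw [Fintype.card_prod, ZMod.card, mul_comm]
  rw [← hcard]
  refine isRSGraph_of_fintype _ (fun p => isInducedMatching_directionMatching h p.1 p.2)
    (fun p => ?_) (pairwise_disjoint_directionMatching h) (mem_edgeSet_cayleyGraph_iff h)
  rw [← card_directionMatching h p.1 p.2]
  omega

end CayleyGraph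

def cubeDirection (n : ℕ) : Option (Fin n) → Fin n → ZMod 2
  | none => 1
  | some i => 1 + Pi.single i 1

def cubeFunctional (n : ℕ) : Option (Fin n) → (Fin n → ZMod 2) →+ ZMod 2
  | none => ∑ i, Pi.evalAddMonoidHom (fun _ => ZMod 2) i
  | some i => Pi.evalAddMonoidHom (fun _ => ZMod 2) i

theorem separatesDirections_cube {n : ℕ} (hn : Even n) :
    SeparatesDirections (cubeFunctional n) (cubeDirection n) := by
  have hn' : (n : ZMod 2) = 0 := hn.natCast_zmod_two
  rintro (_ | j) (_ | k)
  · simp [cubeFunctional, cubeDirection, hn']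
  · simp [cubeFunctional, cubeDirection]
  · simp [cubeFunctional, cubeDirection, sum_add_distrib, hn']
  · rcases eq_or_ne j k with rfl | hjk
    · simpa [cubeFunctional, cubeDirection] using ZModModule.add_self (1 : ZMod 2)
    · simp [cubeFunctional, cubeDirection, hjk]

/-- For every integer `m ≥ 1`, letting `n = 2^(2m)` (so that `log₂ n = 2m` is even),
there exists an `(n/4, 2·(log₂ n + 1))`-RS graph on `n` vertices. -/
theorem exists_RS_even_power_of_two (m : ℕ) (hm : 1 ≤ m) :
    ∃ (V : Type) (inst : Fintype V) (G : SimpleGraph V),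
      @Fintype.card V inst = 2 ^ (2 * m) ∧
      IsRSGraph G (2 ^ (2 * m) / 4) (2 * (2 * m + 1)) := by
  have : NeZero (2 * m) := ⟨by omega⟩
  have hcard : Fintype.card (Fin (2 * m) → ZMod 2) = 2 ^ (2 * m) := by simp
  refine ⟨Fin (2 * m) → ZMod 2, inferInstance, cayleyGraph (cubeDirection (2 * m)), hcard, ?_⟩
  simpa [hcard] using isRSGraph_cayleyGraph (separatesDirections_cube (even_two_mul m))
end

section
/- (Plotkin-type bound) Let v₀, v₁, …, v_t be t+1 vectors in {0,1}^n such that the Hamming distance between any two distinct vectors is at least d. Then d·(t+1)·t/2 ≤ n·⌊(t+1)²/4⌋; in particular, d·(t+1)·t/2 ≤ n·(t+1)²/4 when t is odd, and d·(t+1)·t/2 ≤ n·t·(t+2)/4 when t is even. -/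
/-!
Sum the Hamming distances over all ordered pairs of distinct codewords. Each of the
`(t+1)t` pairs contributes at least `d`. Counted coordinate by coordinate instead, a
coordinate in which `a` codewords carry `true` and `b = t+1-a` carry `false` separates
exactly `2ab ≤ 2⌊(t+1)²/4⌋` ordered pairs.
-/

open Finset

theorem mul_le_add_sq_div_four (a b : ℕ) : a * b ≤ (a + b) ^ 2 / 4 := by
  rw [Nat.le_div_iff_mul_le (by norm_num)]
  nlinarith [two_mul_le_add_sq a b]

theorem four_mul_sq_succ_div_four_of_odd {t : ℕ} (ht : Odd t) :
    4 * ((t + 1) ^ 2 / 4) = (t + 1) ^ 2 :=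
  Nat.mul_div_cancel' (by simpa using pow_dvd_pow_of_dvd (even_iff_two_dvd.mp ht.add_one) 2)

theorem four_mul_sq_succ_div_four_of_even {t : ℕ} (ht : Even t) :
    4 * ((t + 1) ^ 2 / 4) = t * (t + 2) := by
  obtain ⟨s, rfl⟩ := ht
  rw [show (s + s + 1) ^ 2 = 4 * (s * (s + 1)) + 1 by ring,
    show (s + s) * (s + s + 2) = 4 * (s * (s + 1)) by ring]
  omega

section

variable {ι κ : Type*} [Fintype ι] [Fintype κ]

theorem card_pairs_ne_le (w : ι → Bool) :
    #{p : ι × ι | w p.1 ≠ w p.2} ≤ 2 * (Fintype.card ι ^ 2 / 4) := by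
  set T : Finset ι := {i | w i = true}
  set F : Finset ι := {i | w i = false}
  have hdisj : Disjoint (T ×ˢ F) (F ×ˢ T) :=
    disjoint_product.2 (Or.inl (disjoint_filter.2 fun i _ h => by simp [h]))
  have hsplit : ({p : ι × ι | w p.1 ≠ w p.2} : Finset (ι × ι)) =
      (T ×ˢ F).disjUnion (F ×ˢ T) hdisj := by
    ext ⟨i, j⟩
    simp only [T, F, mem_filter, mem_disjUnion, mem_product, mem_univ, true_and]
    cases w i <;> cases w j <;> simp
  have hcard : #T + #F = Fintype.card ι := by
    simpa [T, F] using card_filter_add_card_filter_not (s := univ) (fun i => w i = true)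
  rw [hsplit, card_disjUnion, card_product, card_product, mul_comm #F,
    ← two_mul, ← hcard]
  exact Nat.mul_le_mul_left 2 (mul_le_add_sq_div_four _ _)

theorem sum_hammingDist_eq_sum_card_ne {β : κ → Type*} [∀ k, DecidableEq (β k)]
    (v : ι → ∀ k, β k) :
    ∑ p : ι × ι, hammingDist (v p.1) (v p.2) = ∑ k, #{p : ι × ι | v p.1 k ≠ v p.2 k} := by
  simp only [hammingDist, card_filter]
  exact sum_comm

theorem sum_hammingDist_le (v : ι → κ → Bool) :
    ∑ p : ι × ι, hammingDist (v p.1) (v p.2) ≤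
      Fintype.card κ * (2 * (Fintype.card ι ^ 2 / 4)) := by
  rw [sum_hammingDist_eq_sum_card_ne]
  calc _ ≤ ∑ _k : κ, 2 * (Fintype.card ι ^ 2 / 4) :=
        sum_le_sum fun k _ => card_pairs_ne_le (v · k)
    _ = _ := by simp

theorem mul_card_offDiag_le_sum_hammingDist [DecidableEq ι] {β : κ → Type*}
    [∀ k, DecidableEq (β k)] {d : ℕ} (v : ι → ∀ k, β k)
    (hd : ∀ i j, i ≠ j → d ≤ hammingDist (v i) (v j)) :
    d * #(univ : Finset ι).offDiag ≤ ∑ p : ι × ι, hammingDist (v p.1) (v p.2) :=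
  calc d * #(univ : Finset ι).offDiag = ∑ _p ∈ univ.offDiag, d := by
        rw [sum_const, smul_eq_mul, mul_comm]
    _ ≤ ∑ p ∈ univ.offDiag, hammingDist (v p.1) (v p.2) :=
        sum_le_sum fun p hp => hd _ _ (mem_offDiag.1 hp).2.2
    _ ≤ _ := sum_le_sum_of_subset (subset_univ _)

theorem plotkin_double_count [DecidableEq ι] {d : ℕ} (v : ι → κ → Bool)
    (hd : ∀ i j, i ≠ j → d ≤ hammingDist (v i) (v j)) :
    d * (Fintype.card ι * (Fintype.card ι - 1)) ≤
      Fintype.card κ * (2 * (Fintype.card ι ^ 2 / 4)) := by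
  have := (mul_card_offDiag_le_sum_hammingDist v hd).trans (sum_hammingDist_le v)
  rwa [offDiag_card, card_univ, ← Nat.mul_sub_one] at this

end

/-- **Plotkin-type bound.** If `v₀, v₁, …, v_t` are `t+1` vectors in `{0,1}^n` whose pairwise
Hamming distances are all at least `d`, then `d·(t+1)·t/2 ≤ n·⌊(t+1)²/4⌋`; in particular,
`2·d·(t+1)·t ≤ n·(t+1)²` when `t` is odd, and `2·d·(t+1)·t ≤ n·t·(t+2)` when `t` is even. -/
theorem plotkin_type_bound (n t d : ℕ) (v : Fin (t + 1) → Fin n → Bool)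
    (hd : ∀ i j : Fin (t + 1), i ≠ j → d ≤ hammingDist (v i) (v j)) :
    d * ((t + 1) * t) / 2 ≤ n * ((t + 1) ^ 2 / 4) ∧
    (Odd t → 2 * (d * ((t + 1) * t)) ≤ n * (t + 1) ^ 2) ∧
    (Even t → 2 * (d * ((t + 1) * t)) ≤ n * (t * (t + 2))) := by
  have key : d * ((t + 1) * t) ≤ 2 * (n * ((t + 1) ^ 2 / 4)) := by
    simpa [mul_left_comm] using plotkin_double_count v hd
  refine ⟨Nat.div_le_of_le_mul key, fun ht => ?_, fun ht => ?_⟩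
  · rw [← four_mul_sq_succ_div_four_of_odd ht]
    linarith
  · rw [← four_mul_sq_succ_div_four_of_even ht]
    linarith
end
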